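/- Let γ > 0, let C ∈ ℝ^{N×N} be symmetric, let q ∈ ℝᴺ, and suppose S ∈ ℝ^{N×N} is invertible with SᵀS = diag(σ₁, …, σ_N) and SᵀCS = diag(τ₁, …, τ_N). Then the supremum of wᵀCw + 2qᵀw over all w ∈ ℝᴺ with ‖w‖₂ ≤ γ equals the infimum of Σᵢ tᵢ + γ²λ over all λ ≥ 0 and t ∈ ℝᴺ satisfying ((Sᵀq)ᵢ, tᵢ, λσᵢ − τᵢ) ∈ Q for every i ∈ {1, …, N}. -/

import Mathlib

open Matrix

/-- The set `Q = {(x, y, z) ∈ ℝ³ : ‖(2x, y − z)‖₂ ≤ y + z}`. -/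
def socQ : Set (ℝ × ℝ × ℝ) :=
  {p | Real.sqrt (4 * p.1 ^ 2 + (p.2.1 - p.2.2) ^ 2) ≤ p.2.1 + p.2.2}

/-!
Rescaling the columns of `S` by `σᵢ^(-1/2)` gives an orthogonal matrix that still diagonalizes
`C`; in its coordinates the problem becomes the separable trust-region problem
`max ∑ αᵢ uᵢ² + 2 βᵢ uᵢ` over `‖u‖ ≤ γ`, and the cone constraints become
`(βᵢ, tᵢ, λ - αᵢ) ∈ Q`, i.e. `tᵢ, λ - αᵢ ≥ 0` and `tᵢ (λ - αᵢ) ≥ βᵢ²`. Weak duality is `2 βᵢ uᵢ ≤ tᵢ + (λ - αᵢ) uᵢ²`. Both optima are attained at a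
KKT pair `(λ, u)`: with `Λ = max (0, maxᵢ αᵢ)`, either the secular function
`λ ↦ ∑ (βᵢ / (λ - αᵢ))²`, which tends to `0` at infinity, takes the value `γ²` on `(Λ, ∞)`, or it
stays below `γ²` there. In the second case `βᵢ = 0` whenever `αᵢ = Λ`, and `λ = Λ` works once the
missing norm is put on an eigendirection of `Λ`.
-/

open Filter Topology Finset

theorem mem_socQ_iff {x y z : ℝ} : (x, y, z) ∈ socQ ↔ 0 ≤ y ∧ 0 ≤ z ∧ x ^ 2 ≤ y * z := by
  rw [socQ, Set.mem_ofPred_eq, Real.sqrt_le_iff]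
  constructor
  · rintro ⟨hyz, hsq⟩
    refine ⟨?_, ?_, ?_⟩ <;> nlinarith [sq_nonneg x, sq_nonneg (y - z)]
  · rintro ⟨hy, hz, h⟩
    constructor <;> nlinarith

theorem two_mul_mul_le_of_mem_socQ {x y z : ℝ} (h : (x, y, z) ∈ socQ) (v : ℝ) :
    2 * x * v ≤ y + z * v ^ 2 := by
  obtain ⟨hy, hz, hxyz⟩ := mem_socQ_iff.1 h
  rcases hz.eq_or_lt with rfl | hz
  · obtain rfl : x = 0 := by nlinarith [sq_nonneg x]
    simpa using hy
  · nlinarith [sq_nonneg (z * v - x)]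

theorem mul_mem_socQ {z : ℝ} (hz : 0 ≤ z) (v : ℝ) : (z * v, z * v ^ 2, z) ∈ socQ :=
  mem_socQ_iff.2 ⟨by positivity, hz, le_of_eq (by ring)⟩

theorem mem_socQ_mul_iff {s : ℝ} (hs : 0 < s) (x y z : ℝ) :
    (x, y, s * z) ∈ socQ ↔ (x / √s, y, z) ∈ socQ := by
  simp only [mem_socQ_iff, div_pow, Real.sq_sqrt hs.le, div_le_iff₀ hs,
    mul_nonneg_iff_of_pos_left hs]
  constructor <;> rintro ⟨h1, h2, h3⟩ <;> exact ⟨h1, h2, by linarith⟩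

theorem sum_sq_update_of_eq_zero {ι : Type*} [Fintype ι] [DecidableEq ι] {v : ι → ℝ} {j : ι}
    (hv : v j = 0) (s : ℝ) :
    ∑ i, Function.update v j s i ^ 2 = s ^ 2 + ∑ i, v i ^ 2 := by
  have hsq : (fun i => Function.update v j s i ^ 2) =
      Function.update (fun i => v i ^ 2) j (s ^ 2) :=
    funext (Function.apply_update (fun _ x => x ^ 2) v j s)
  rw [hsq, sum_update_of_mem (mem_univ j),
    sum_eq_add_sum_sdiff_singleton_of_mem (mem_univ j) (f := fun i => v i ^ 2), hv]
  ring

noncomputable section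

namespace TrustRegion

variable {ι : Type*} [Fintype ι] (α β : ι → ℝ) (γ : ℝ)

def values : Set ℝ :=
  {val | ∃ u : ι → ℝ, ∑ i, u i ^ 2 ≤ γ ^ 2 ∧ val = ∑ i, (α i * u i ^ 2 + 2 * β i * u i)}

def dualValues : Set ℝ :=
  {val | ∃ (lam : ℝ) (t : ι → ℝ), 0 ≤ lam ∧ (∀ i, (β i, t i, lam - α i) ∈ socQ) ∧
    val = ∑ i, t i + γ ^ 2 * lam}

def sol (lam : ℝ) (i : ι) : ℝ := β i / (lam - α i)

def secular (lam : ℝ) : ℝ := ∑ i, sol α β lam i ^ 2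

structure IsKKT (lam : ℝ) (u : ι → ℝ) : Prop where
  lam_nonneg : 0 ≤ lam
  le_lam : ∀ i, α i ≤ lam
  stationary : ∀ i, (lam - α i) * u i = β i
  norm_le : ∑ i, u i ^ 2 ≤ γ ^ 2
  complementary : lam = 0 ∨ ∑ i, u i ^ 2 = γ ^ 2

variable {α β γ}

theorem tendsto_secular_atTop : Tendsto (secular α β) atTop (𝓝 0) := by
  have h : ∀ i, Tendsto (fun lam => sol α β lam i ^ 2) atTop (𝓝 0) := fun i => by
    simpa [sol, div_eq_mul_inv, sub_eq_add_neg] using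
      (((tendsto_atTop_add_const_right _ (-α i) tendsto_id).inv_tendsto_atTop).const_mul
        (β i)).pow 2
  unfold secular
  simpa using tendsto_finsetSum univ fun i _ => h i

theorem continuousAt_secular {lam : ℝ} (h : ∀ i, β i = 0 ∨ α i ≠ lam) :
    ContinuousAt (secular α β) lam := by
  refine tendsto_finsetSum univ fun i _ => ?_
  rcases h i with hβ | hα
  · simp [sol, hβ]
  · exact (continuousAt_const.div (continuousAt_id.sub continuousAt_const)
      (sub_ne_zero.2 hα.symm)).pow 2

theorem sq_le_secular (lam : ℝ) (i : ι) : sol α β lam i ^ 2 ≤ secular α β lam :=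
  single_le_sum (f := fun j => sol α β lam j ^ 2) (fun _ _ => sq_nonneg _) (mem_univ i)

theorem exists_threshold (α : ι → ℝ) :
    ∃ Λ, 0 ≤ Λ ∧ (∀ i, α i ≤ Λ) ∧ (Λ = 0 ∨ ∃ j, α j = Λ) := by
  classical
  let s := insert 0 (univ.image α)
  have hs : s.Nonempty := insert_nonempty _ _
  refine ⟨s.max' hs, s.le_max' _ (mem_insert_self _ _),
    fun i => s.le_max' _ (mem_insert_of_mem (mem_image_of_mem _ (mem_univ i))), ?_⟩
  simpa [s, eq_comm] using s.max'_mem hs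

theorem eq_zero_of_secular_lt (hγ : 0 < γ) {Λ : ℝ}
    (h : ∀ lam, Λ < lam → secular α β lam < γ ^ 2) {i : ι} (hi : α i = Λ) : β i = 0 := by
  by_contra hβ
  have hlam : Λ < Λ + |β i| / γ := lt_add_of_pos_right _ (by positivity)
  have hsol : sol α β (Λ + |β i| / γ) i ^ 2 = γ ^ 2 := by
    have : |β i| ≠ 0 := abs_ne_zero.2 hβ
    rw [sol, hi, add_sub_cancel_left, div_pow, div_pow, sq_abs]
    field_simp
  exact (h _ hlam).not_ge (hsol ▸ sq_le_secular _ i)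

theorem exists_secular_eq (hγ : 0 < γ) {Λ lam₀ : ℝ} (hΛ : ∀ i, α i ≤ Λ) (hlam₀ : Λ < lam₀)
    (h : γ ^ 2 ≤ secular α β lam₀) : ∃ lam, lam₀ ≤ lam ∧ secular α β lam = γ ^ 2 := by
  have hγ2 : (0 : ℝ) < γ ^ 2 := by positivity
  obtain ⟨M, hM, hMγ⟩ := ((eventually_ge_atTop lam₀).and
    ((tendsto_secular_atTop (α := α) (β := β)).eventually (gt_mem_nhds hγ2))).exists
  have hcont : ContinuousOn (secular α β) (Set.Icc lam₀ M) := fun x hx =>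
    (continuousAt_secular fun i => Or.inr (by linarith [hΛ i, hx.1])).continuousWithinAt
  obtain ⟨lam, hlam, heq⟩ := intermediate_value_Icc' hM hcont ⟨hMγ.le, h⟩
  exact ⟨lam, hlam.1, heq⟩

theorem isKKT_sol {lam : ℝ} (hlam : 0 ≤ lam) (hα : ∀ i, α i < lam) (h : secular α β lam = γ ^ 2) :
    IsKKT α β γ lam (sol α β lam) where
  lam_nonneg := hlam
  le_lam i := (hα i).le
  stationary i := mul_div_cancel₀ _ (sub_ne_zero.2 (hα i).ne')
  norm_le := h.le
  complementary := Or.inr h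

theorem exists_isKKT_of_boundary {Λ : ℝ} (hΛ0 : 0 ≤ Λ) (hΛ : ∀ i, α i ≤ Λ)
    (hΛmem : Λ = 0 ∨ ∃ j, α j = Λ) (hβ : ∀ i, α i = Λ → β i = 0)
    (hsec : secular α β Λ ≤ γ ^ 2) : ∃ u, IsKKT α β γ Λ u := by
  -- where `α i = Λ`, `sol α β Λ i` is the junk value `β i / 0 = 0`, harmless since `β i = 0`
  have hstat : ∀ i, (Λ - α i) * sol α β Λ i = β i := fun i => by
    by_cases hi : α i = Λ
    · simp [sol, hi, hβ i hi]
    · exact mul_div_cancel₀ _ (sub_ne_zero.2 (Ne.symm hi))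
  rcases hΛmem with rfl | ⟨j, hj⟩
  · exact ⟨sol α β 0, hΛ0, hΛ, hstat, hsec, Or.inl rfl⟩
  -- the eigendirection `j` of the top eigenvalue absorbs the slack in the norm constraint
  classical
  have hvj : sol α β Λ j = 0 := by simp [sol, hj, hβ j hj]
  set u := Function.update (sol α β Λ) j √(γ ^ 2 - secular α β Λ)
  have hnorm : ∑ i, u i ^ 2 = γ ^ 2 := by
    rw [sum_sq_update_of_eq_zero hvj, Real.sq_sqrt (sub_nonneg.2 hsec), secular, sub_add_cancel]
  refine ⟨u, hΛ0, hΛ, fun i => ?_, hnorm.le, Or.inr hnorm⟩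
  rcases eq_or_ne i j with rfl | hij
  · simp [u, hj, hβ i hj]
  · rw [show u i = sol α β Λ i from Function.update_of_ne hij _ _, hstat]

theorem exists_isKKT (hγ : 0 < γ) (α β : ι → ℝ) : ∃ lam u, IsKKT α β γ lam u := by
  obtain ⟨Λ, hΛ0, hΛ, hΛmem⟩ := exists_threshold α
  by_cases h : ∃ lam₀, Λ < lam₀ ∧ γ ^ 2 ≤ secular α β lam₀
  · obtain ⟨lam₀, hlam₀, hsec⟩ := h
    obtain ⟨lam, hlam, heq⟩ := exists_secular_eq hγ hΛ hlam₀ hsec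
    exact ⟨lam, _, isKKT_sol (by linarith) (fun i => by linarith [hΛ i]) heq⟩
  push Not at h
  have hβ : ∀ i, α i = Λ → β i = 0 := fun i => eq_zero_of_secular_lt hγ h
  have hcont : ContinuousAt (secular α β) Λ := continuousAt_secular fun i =>
    (em (α i = Λ)).imp (hβ i) id
  have hsec : secular α β Λ ≤ γ ^ 2 := le_of_tendsto (hcont.mono_left nhdsWithin_le_nhds)
    (eventually_nhdsWithin_of_forall (s := Set.Ioi Λ) fun lam hlam => (h lam hlam).le)
  exact ⟨Λ, exists_isKKT_of_boundary hΛ0 hΛ hΛmem hβ hsec⟩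

theorem le_of_mem_values_of_mem_dualValues {p d : ℝ} (hp : p ∈ values α β γ)
    (hd : d ∈ dualValues α β γ) : p ≤ d := by
  obtain ⟨u, hu, rfl⟩ := hp
  obtain ⟨lam, t, hlam, ht, rfl⟩ := hd
  calc ∑ i, (α i * u i ^ 2 + 2 * β i * u i) ≤ ∑ i, (t i + lam * u i ^ 2) :=
        sum_le_sum fun i _ => by linarith [two_mul_mul_le_of_mem_socQ (ht i) (u i)]
    _ = ∑ i, t i + lam * ∑ i, u i ^ 2 := by rw [sum_add_distrib, mul_sum]
    _ ≤ ∑ i, t i + γ ^ 2 * lam := by nlinarith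

namespace IsKKT

variable {lam : ℝ} {u : ι → ℝ} (h : IsKKT α β γ lam u)
include h

theorem value_eq : ∑ i, (α i * u i ^ 2 + 2 * β i * u i) =
    ∑ i, (lam - α i) * u i ^ 2 + γ ^ 2 * lam := by
  have hslack : lam * ∑ i, u i ^ 2 = γ ^ 2 * lam := by
    rcases h.complementary with rfl | hu
    · ring
    · rw [hu, mul_comm]
  rw [← hslack, mul_sum, ← sum_add_distrib]
  refine sum_congr rfl fun i _ => ?_
  rw [← h.stationary i]
  ring

theorem mem_dualValues : ∑ i, (α i * u i ^ 2 + 2 * β i * u i) ∈ dualValues α β γ := by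
  refine ⟨lam, fun i => (lam - α i) * u i ^ 2, h.lam_nonneg, fun i => ?_, h.value_eq⟩
  rw [← h.stationary i]
  exact mul_mem_socQ (sub_nonneg.2 (h.le_lam i)) (u i)

theorem isGreatest_values :
    IsGreatest (values α β γ) (∑ i, (α i * u i ^ 2 + 2 * β i * u i)) :=
  ⟨⟨u, h.norm_le, rfl⟩, fun _ hp => le_of_mem_values_of_mem_dualValues hp h.mem_dualValues⟩

theorem isLeast_dualValues :
    IsLeast (dualValues α β γ) (∑ i, (α i * u i ^ 2 + 2 * β i * u i)) :=
  ⟨h.mem_dualValues, fun _ hd => le_of_mem_values_of_mem_dualValues ⟨u, h.norm_le, rfl⟩ hd⟩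

end IsKKT

theorem sSup_values_eq_sInf_dualValues (hγ : 0 < γ) (α β : ι → ℝ) :
    sSup (values α β γ) = sInf (dualValues α β γ) := by
  obtain ⟨lam, u, h⟩ := exists_isKKT hγ α β
  rw [h.isGreatest_values.csSup_eq, h.isLeast_dualValues.csInf_eq]

end TrustRegion

end

section ChangeOfVariables

variable {ι : Type*} [Fintype ι]

theorem dotProduct_mulVec_conj (R C : Matrix ι ι ℝ) (u : ι → ℝ) :
    (R *ᵥ u) ⬝ᵥ (C *ᵥ (R *ᵥ u)) = u ⬝ᵥ ((Rᵀ * C * R) *ᵥ u) := by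
  rw [← mulVec_mulVec, ← mulVec_mulVec, dotProduct_mulVec u, vecMul_transpose]

theorem setOf_socQ_mul_sub_eq_dualValues {σ : ι → ℝ} (hσ : ∀ i, 0 < σ i) (b τ : ι → ℝ) (γ : ℝ) :
    {val : ℝ | ∃ (lam : ℝ) (t : ι → ℝ), 0 ≤ lam ∧
        (∀ i, (b i, t i, lam * σ i - τ i) ∈ socQ) ∧ val = ∑ i, t i + γ ^ 2 * lam} =
      TrustRegion.dualValues (fun i => τ i / σ i) (fun i => b i / √(σ i)) γ := by
  have hscale : ∀ lam i, lam * σ i - τ i = σ i * (lam - τ i / σ i) := fun lam i => by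
    field_simp [(hσ i).ne']
  ext val
  refine exists_congr fun lam => exists_congr fun t => and_congr_right fun _ =>
    and_congr_left fun _ => forall_congr' fun i => ?_
  rw [hscale, mem_socQ_mul_iff (hσ i)]

variable [DecidableEq ι]

theorem dotProduct_diagonal_mulVec (d u : ι → ℝ) :
    u ⬝ᵥ (diagonal d *ᵥ u) = ∑ i, d i * u i ^ 2 :=
  sum_congr rfl fun i _ => by rw [mulVec_diagonal]; ring

theorem sum_sq_mulVec_of_transpose_mul_self {R : Matrix ι ι ℝ} (hR : Rᵀ * R = 1) (u : ι → ℝ) :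
    ∑ i, (R *ᵥ u) i ^ 2 = ∑ i, u i ^ 2 := by
  have h := dotProduct_mulVec_conj R 1 u
  rw [Matrix.mul_one, hR, one_mulVec, one_mulVec] at h
  simpa [dotProduct, sq] using h

theorem pos_of_transpose_mul_self_eq_diagonal {S : Matrix ι ι ℝ} (hS : IsUnit S) {σ : ι → ℝ}
    (hSS : Sᵀ * S = diagonal σ) (i : ι) : 0 < σ i := by
  have h := PosDef.conjTranspose_mul_self S (mulVec_injective_iff_isUnit.2 hS)
  rw [conjTranspose_eq_transpose_of_trivial, hSS, posDef_diagonal_iff] at h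
  exact h i

theorem transpose_mul_diagonal_conj {S M : Matrix ι ι ℝ} {e : ι → ℝ}
    (h : Sᵀ * M * S = diagonal e) (d : ι → ℝ) :
    (S * diagonal d)ᵀ * M * (S * diagonal d) = diagonal fun i => d i ^ 2 * e i := by
  rw [transpose_mul, diagonal_transpose, Matrix.mul_assoc, Matrix.mul_assoc, ← Matrix.mul_assoc M,
    ← Matrix.mul_assoc Sᵀ, ← Matrix.mul_assoc Sᵀ, h, diagonal_mul_diagonal, diagonal_mul_diagonal]
  congr 1; funext i; ring

theorem transpose_mul_diagonal_inv_sqrt_conj {S M : Matrix ι ι ℝ} {σ e : ι → ℝ}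
    (hσ : ∀ i, 0 < σ i) (h : Sᵀ * M * S = diagonal e) :
    (S * diagonal fun i => (√(σ i))⁻¹)ᵀ * M * (S * diagonal fun i => (√(σ i))⁻¹) =
      diagonal fun i => e i / σ i := by
  rw [transpose_mul_diagonal_conj h]
  simp only [inv_pow, Real.sq_sqrt (hσ _).le, inv_mul_eq_div]

theorem setOf_quadratic_ball_eq_values {R C : Matrix ι ι ℝ} {α : ι → ℝ} (hR : Rᵀ * R = 1)
    (hRC : Rᵀ * C * R = diagonal α) (q : ι → ℝ) {γ : ℝ} (hγ : 0 ≤ γ) :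
    {val : ℝ | ∃ w : ι → ℝ, √(∑ i, w i ^ 2) ≤ γ ∧ val = w ⬝ᵥ C *ᵥ w + 2 * (q ⬝ᵥ w)} =
      TrustRegion.values α (Rᵀ *ᵥ q) γ := by
  have hval : ∀ u, (R *ᵥ u) ⬝ᵥ C *ᵥ (R *ᵥ u) + 2 * (q ⬝ᵥ R *ᵥ u) =
      ∑ i, (α i * u i ^ 2 + 2 * (Rᵀ *ᵥ q) i * u i) := fun u => by
    rw [dotProduct_mulVec_conj, hRC, dotProduct_diagonal_mulVec, dotProduct_mulVec,
      ← mulVec_transpose, dotProduct, mul_sum, ← sum_add_distrib]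
    exact sum_congr rfl fun i _ => by ring
  have hball : ∀ u, √(∑ i, (R *ᵥ u) i ^ 2) ≤ γ ↔ ∑ i, u i ^ 2 ≤ γ ^ 2 := fun u => by
    rw [sum_sq_mulVec_of_transpose_mul_self hR, Real.sqrt_le_left hγ]
  ext val
  constructor
  · rintro ⟨w, hw, rfl⟩
    obtain ⟨u, rfl⟩ : ∃ u, R *ᵥ u = w :=
      ⟨Rᵀ *ᵥ w, by rw [mulVec_mulVec, mul_eq_one_comm.1 hR, one_mulVec]⟩
    exact ⟨u, (hball u).1 hw, hval u⟩
  · rintro ⟨u, hu, rfl⟩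
    exact ⟨R *ᵥ u, (hball u).2 hu, (hval u).symm⟩

end ChangeOfVariables

theorem worst_case_quadratic_ball_eq_soc_value_general {N : ℕ} (γ : ℝ) (hγ : 0 < γ)
    (C : Matrix (Fin N) (Fin N) ℝ) (q : Fin N → ℝ)
    (S : Matrix (Fin N) (Fin N) ℝ) (hS : IsUnit S)
    (σ τ : Fin N → ℝ)
    (hSS : Sᵀ * S = Matrix.diagonal σ)
    (hSC : Sᵀ * C * S = Matrix.diagonal τ) :
    sSup {val : ℝ | ∃ w : Fin N → ℝ, Real.sqrt (∑ i, w i ^ 2) ≤ γ ∧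
        val = w ⬝ᵥ C.mulVec w + 2 * (q ⬝ᵥ w)} =
      sInf {val : ℝ | ∃ (lam : ℝ) (t : Fin N → ℝ), 0 ≤ lam ∧
        (∀ i : Fin N, ((Sᵀ.mulVec q) i, t i, lam * σ i - τ i) ∈ socQ) ∧
        val = (∑ i, t i) + γ ^ 2 * lam} := by
  have hσ := pos_of_transpose_mul_self_eq_diagonal hS hSS
  set R := S * diagonal fun i => (√(σ i))⁻¹
  have hR : Rᵀ * R = 1 := by
    have h := transpose_mul_diagonal_inv_sqrt_conj (S := S) (M := 1) hσ (by rwa [Matrix.mul_one])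
    rw [Matrix.mul_one] at h
    refine h.trans ?_
    rw [← diagonal_one]
    exact congrArg diagonal (funext fun i => div_self (hσ i).ne')
  have hRC : Rᵀ * C * R = diagonal fun i => τ i / σ i :=
    transpose_mul_diagonal_inv_sqrt_conj hσ hSC
  have hRq : Rᵀ *ᵥ q = fun i => (Sᵀ *ᵥ q) i / √(σ i) := by
    rw [transpose_mul, ← mulVec_mulVec, diagonal_transpose]
    funext i
    rw [mulVec_diagonal, inv_mul_eq_div]
  rw [setOf_quadratic_ball_eq_values hR hRC q hγ.le, hRq, setOf_socQ_mul_sub_eq_dualValues hσ]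
  exact TrustRegion.sSup_values_eq_sInf_dualValues hγ _ _

theorem worst_case_quadratic_ball_eq_soc_value {N : ℕ} (γ : ℝ) (hγ : 0 < γ)
    (C : Matrix (Fin N) (Fin N) ℝ) (hC : C.IsSymm) (q : Fin N → ℝ)
    (S : Matrix (Fin N) (Fin N) ℝ) (hS : IsUnit S)
    (σ τ : Fin N → ℝ)
    (hSS : Sᵀ * S = Matrix.diagonal σ)
    (hSC : Sᵀ * C * S = Matrix.diagonal τ) :
    sSup {val : ℝ | ∃ w : Fin N → ℝ, Real.sqrt (∑ i, w i ^ 2) ≤ γ ∧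
        val = w ⬝ᵥ C.mulVec w + 2 * (q ⬝ᵥ w)} =
      sInf {val : ℝ | ∃ (lam : ℝ) (t : Fin N → ℝ), 0 ≤ lam ∧
        (∀ i : Fin N, ((Sᵀ.mulVec q) i, t i, lam * σ i - τ i) ∈ socQ) ∧
        val = (∑ i, t i) + γ ^ 2 * lam} :=
  worst_case_quadratic_ball_eq_soc_value_general γ hγ C q S hS σ τ hSS hSC
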